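/- arXiv:1112.4951 — 3 statements merged into one kernel-verified Lean document; each statement's English description precedes it below -/
import Mathlib

section
/- (Guaranteed improvement of within-stratum centered calibration under sampling without replacement.) The matrix Σ − Σ_cc = Σ_{j=1}^J ν_j((1−p_j)/p_j) Var_{0|j}(Q_cc^{(j)}ℓ̃₀) is positive semidefinite; equivalently, for every vector a ∈ ℝ^p, aᵀ Σ_cc a ≤ aᵀ Σ a. -/
open MeasureTheory ProbabilityTheory Finset Matrix

/-!
Within a stratum, with `Y = Z - μ_j` centered, `Q = C A⁻¹ Y` where `C = Cov(ℓ̃₀, Y)` and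
`A = Cov(Y)`: it is the least-squares projection of `ℓ̃₀` on `Y`. Bilinearity of the covariance
gives `Cov(ℓ̃₀) - Cov(ℓ̃₀ - Q) = C A⁻¹ Cᵀ`, which is positive semidefinite because `A`, hence `A⁻¹`,
is. Summing over the strata with the nonnegative weights `ν_j (1 - p_j) / p_j` gives the claim.
-/

namespace Matrix

lemma nonsing_inv_mul_mul_nonsing_inv {n α : Type*} [Fintype n] [DecidableEq n] [CommRing α]
    (A : Matrix n n α) : A⁻¹ * A * A⁻¹ = A⁻¹ := by
  by_cases h : IsUnit A.det
  · rw [nonsing_inv_mul A h, Matrix.one_mul]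
  · rw [nonsing_inv_apply_not_isUnit A h, Matrix.zero_mul, Matrix.zero_mul]

lemma posSemidef_of_add_sum_sub_of_add_sum {n J : Type*} [Fintype J] (I : Matrix n n ℝ)
    {w : J → ℝ} (hw : ∀ j, 0 ≤ w j) {S T : J → Matrix n n ℝ}
    (hST : ∀ j, (S j - T j).PosSemidef) :
    ((of fun a b => I a b + ∑ j, w j * S j a b)
      - of fun a b => I a b + ∑ j, w j * T j a b).PosSemidef := by
  have hdiff : ((of fun a b => I a b + ∑ j, w j * S j a b)
      - of fun a b => I a b + ∑ j, w j * T j a b) = ∑ j, w j • (S j - T j) := by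
    ext a b
    simp only [sub_apply, of_apply, sum_apply, smul_apply, smul_eq_mul, add_sub_add_left_eq_sub,
      ← Finset.sum_sub_distrib, mul_sub]
  rw [hdiff]
  exact posSemidef_sum _ fun j _ => (hST j).smul (hw j)

lemma PosSemidef.dotProduct_mulVec_le {n : Type*} [Fintype n] {A B : Matrix n n ℝ}
    (h : (B - A).PosSemidef) (x : n → ℝ) : x ⬝ᵥ A *ᵥ x ≤ x ⬝ᵥ B *ᵥ x := by
  have := h.dotProduct_mulVec_nonneg x
  rwa [star_trivial, sub_mulVec, dotProduct_sub, sub_nonneg] at this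

end Matrix

namespace ProbabilityTheory

variable {Ω ι ι' ι'' : Type*} [MeasurableSpace Ω] {μ : Measure Ω}

lemma covariance_eq_integral_mul_of_integral_eq_zero [IsProbabilityMeasure μ] {X Y : Ω → ℝ}
    (hX : MemLp X 2 μ) (hY : MemLp Y 2 μ) (hY₀ : μ[Y] = 0) :
    cov[X, Y; μ] = μ[X * Y] := by
  rw [covariance_eq_sub hX hY, hY₀, mul_zero, sub_zero]

lemma covariance_self_nonneg (X : Ω → ℝ) : 0 ≤ cov[X, X; μ] :=
  integral_nonneg fun _ => mul_self_nonneg _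

noncomputable def covMatrix (X : Ω → ι → ℝ) (Y : Ω → ι' → ℝ) (μ : Measure Ω) :
    Matrix ι ι' ℝ :=
  Matrix.of fun a b => cov[fun ω => X ω a, fun ω => Y ω b; μ]

@[simp]
lemma covMatrix_apply (X : Ω → ι → ℝ) (Y : Ω → ι' → ℝ) (a : ι) (b : ι') :
    covMatrix X Y μ a b = cov[fun ω => X ω a, fun ω => Y ω b; μ] := rfl

lemma covMatrix_transpose (X : Ω → ι → ℝ) (Y : Ω → ι' → ℝ) :
    (covMatrix X Y μ)ᵀ = covMatrix Y X μ := by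
  ext a b
  exact covariance_comm _ _

lemma covMatrix_congr_ae {X X' : Ω → ι → ℝ} {Y Y' : Ω → ι' → ℝ}
    (hX : X =ᵐ[μ] X') (hY : Y =ᵐ[μ] Y') : covMatrix X Y μ = covMatrix X' Y' μ := by
  ext a b
  have hXa : (fun ω => X ω a) =ᵐ[μ] fun ω => X' ω a := hX.mono fun _ h => congrFun h a
  have hYb : (fun ω => Y ω b) =ᵐ[μ] fun ω => Y' ω b := hY.mono fun _ h => congrFun h b
  simp only [covMatrix_apply, covariance, integral_congr_ae hXa, integral_congr_ae hYb]
  refine integral_congr_ae ?_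
  filter_upwards [hXa, hYb] with ω h₁ h₂
  rw [h₁, h₂]

lemma memLp_mulVec [Fintype ι'] {q : ENNReal} {Y : Ω → ι' → ℝ}
    (hY : ∀ b, MemLp (fun ω => Y ω b) q μ) (L : Matrix ι'' ι' ℝ) (c : ι'') :
    MemLp (fun ω => (L *ᵥ Y ω) c) q μ :=
  memLp_finsetSum _ fun b _ => (hY b).const_mul (L c b)

section FiniteMeasure

variable [IsFiniteMeasure μ] {X X' : Ω → ι → ℝ} {Y Y' : Ω → ι' → ℝ}

lemma covMatrix_sub_left (hX : ∀ a, MemLp (fun ω => X ω a) 2 μ)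
    (hX' : ∀ a, MemLp (fun ω => X' ω a) 2 μ) (hY : ∀ b, MemLp (fun ω => Y ω b) 2 μ) :
    covMatrix (fun ω => X ω - X' ω) Y μ = covMatrix X Y μ - covMatrix X' Y μ := by
  ext a b
  exact covariance_fun_sub_left (hX a) (hX' a) (hY b)

lemma covMatrix_sub_right (hX : ∀ a, MemLp (fun ω => X ω a) 2 μ)
    (hY : ∀ b, MemLp (fun ω => Y ω b) 2 μ) (hY' : ∀ b, MemLp (fun ω => Y' ω b) 2 μ) :
    covMatrix X (fun ω => Y ω - Y' ω) μ = covMatrix X Y μ - covMatrix X Y' μ := by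
  ext a b
  exact covariance_fun_sub_right (hX a) (hY b) (hY' b)

lemma covMatrix_mulVec_right [Fintype ι'] (hX : ∀ a, MemLp (fun ω => X ω a) 2 μ)
    (hY : ∀ b, MemLp (fun ω => Y ω b) 2 μ) (L : Matrix ι'' ι' ℝ) :
    covMatrix X (fun ω => L *ᵥ Y ω) μ = covMatrix X Y μ * Lᵀ := by
  ext a c
  simp only [covMatrix_apply, mulVec, dotProduct, mul_apply, transpose_apply]
  rw [covariance_fun_sum_right (fun b => (hY b).const_mul (L c b)) (hX a)]
  exact Finset.sum_congr rfl fun b _ => by rw [covariance_const_mul_right, mul_comm]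

lemma covMatrix_mulVec_left [Fintype ι'] (hX : ∀ a, MemLp (fun ω => X ω a) 2 μ)
    (hY : ∀ b, MemLp (fun ω => Y ω b) 2 μ) (L : Matrix ι'' ι' ℝ) :
    covMatrix (fun ω => L *ᵥ Y ω) X μ = L * covMatrix Y X μ := by
  rw [← covMatrix_transpose, covMatrix_mulVec_right hX hY, transpose_mul,
    covMatrix_transpose, transpose_transpose]

lemma posSemidef_covMatrix_self [Fintype ι] (hX : ∀ a, MemLp (fun ω => X ω a) 2 μ) :
    (covMatrix X X μ).PosSemidef := by
  refine .of_dotProduct_mulVec_nonneg ?_ fun x => ?_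
  · rw [IsHermitian, conjTranspose_eq_transpose_of_trivial, covMatrix_transpose]
  · have hquad : star x ⬝ᵥ (covMatrix X X μ *ᵥ x)
        = cov[fun ω => ∑ a, x a * X ω a, fun ω => ∑ b, x b * X ω b; μ] := by
      rw [covariance_fun_sum_fun_sum (fun a => (hX a).const_mul (x a))
        (fun b => (hX b).const_mul (x b))]
      simp only [dotProduct, mulVec, star_trivial, covMatrix_apply, covariance_const_mul_left,
        covariance_const_mul_right, Finset.mul_sum]
      exact Finset.sum_congr rfl fun a _ => Finset.sum_congr rfl fun b _ => by ring
    exact hquad ▸ covariance_self_nonneg _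

lemma covMatrix_sub_regression [Fintype ι'] [DecidableEq ι']
    (hX : ∀ a, MemLp (fun ω => X ω a) 2 μ) (hY : ∀ b, MemLp (fun ω => Y ω b) 2 μ) :
    covMatrix X X μ - covMatrix (fun ω => X ω - (covMatrix X Y μ * (covMatrix Y Y μ)⁻¹) *ᵥ Y ω)
        (fun ω => X ω - (covMatrix X Y μ * (covMatrix Y Y μ)⁻¹) *ᵥ Y ω) μ
      = covMatrix X Y μ * (covMatrix Y Y μ)⁻¹ * (covMatrix X Y μ)ᵀ := by
  set C := covMatrix X Y μ
  set B := (covMatrix Y Y μ)⁻¹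
  have hB : Bᵀ = B := by rw [transpose_nonsing_inv, covMatrix_transpose]
  have hBAB : B * covMatrix Y Y μ * B = B := nonsing_inv_mul_mul_nonsing_inv _
  have hW := memLp_mulVec hY (C * B)
  have hXW : ∀ a, MemLp (fun ω => (X ω - (C * B) *ᵥ Y ω) a) 2 μ := fun a => (hX a).sub (hW a)
  rw [covMatrix_sub_left hX hW hXW, covMatrix_sub_right hX hX hW, covMatrix_sub_right hW hX hW,
    covMatrix_mulVec_right hX hY, covMatrix_mulVec_left hX hY, covMatrix_mulVec_left hW hY,
    covMatrix_mulVec_right hY hY, ← covMatrix_transpose X Y, transpose_mul, hB]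
  have hAB : C * B * (covMatrix Y Y μ * (B * Cᵀ)) = C * B * Cᵀ := by
    conv_rhs => rw [← hBAB]
    simp only [Matrix.mul_assoc]
  rw [hAB]
  simp only [Matrix.mul_assoc]
  abel

lemma posSemidef_covMatrix_sub_regression [Fintype ι] [Fintype ι'] [DecidableEq ι']
    (hX : ∀ a, MemLp (fun ω => X ω a) 2 μ) (hY : ∀ b, MemLp (fun ω => Y ω b) 2 μ) :
    (covMatrix X X μ - covMatrix (fun ω => X ω - (covMatrix X Y μ * (covMatrix Y Y μ)⁻¹) *ᵥ Y ω)
        (fun ω => X ω - (covMatrix X Y μ * (covMatrix Y Y μ)⁻¹) *ᵥ Y ω) μ).PosSemidef := by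
  rw [covMatrix_sub_regression hX hY, ← conjTranspose_eq_transpose_of_trivial]
  exact (posSemidef_covMatrix_self hY).inv.mul_mul_conjTranspose_same _

end FiniteMeasure

section ProbabilityMeasure

variable [IsProbabilityMeasure μ] {X : Ω → ι → ℝ}

lemma covMatrix_self_eq (hX : ∀ a, MemLp (fun ω => X ω a) 2 μ) :
    covMatrix X X μ
      = of fun a b => (∫ ω, X ω a * X ω b ∂μ) - (∫ ω, X ω a ∂μ) * (∫ ω, X ω b ∂μ) := by
  ext a b
  exact covariance_eq_sub (hX a) (hX b)

theorem posSemidef_sub_of_centered_calibration [Fintype ι] [Fintype ι'] [DecidableEq ι']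
    {Z : Ω → ι' → ℝ} (hX : ∀ a, MemLp (fun ω => X ω a) 2 μ)
    (hZ : ∀ c, MemLp (fun ω => Z ω c) 2 μ) {m : ι' → ℝ} (hm : ∀ c, m c = ∫ ω, Z ω c ∂μ)
    {A : Matrix ι' ι' ℝ} (hA : ∀ c d, A c d = ∫ ω, (Z ω c - m c) * (Z ω d - m d) ∂μ)
    {Q : Ω → ι → ℝ} (hQ : ∀ a, ∀ᵐ ω ∂μ, Q ω a =
      ∑ b, ∑ c, (∫ ω', X ω' a * (Z ω' b - m b) ∂μ) * A⁻¹ b c * (Z ω c - m c)) :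
    ((of fun a b => (∫ ω, X ω a * X ω b ∂μ) - (∫ ω, X ω a ∂μ) * (∫ ω, X ω b ∂μ))
      - of fun a b => (∫ ω, (X ω a - Q ω a) * (X ω b - Q ω b) ∂μ)
          - (∫ ω, X ω a - Q ω a ∂μ) * (∫ ω, X ω b - Q ω b ∂μ)).PosSemidef := by
  set Y : Ω → ι' → ℝ := fun ω => Z ω - m
  have hY c : MemLp (fun ω => Y ω c) 2 μ := (hZ c).sub (memLp_const (m c))
  have hY₀ c : ∫ ω, Y ω c ∂μ = 0 := by
    simp [Y, integral_sub ((hZ c).integrable one_le_two) (integrable_const _), hm]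
  have hC a b : covMatrix X Y μ a b = ∫ ω, X ω a * (Z ω b - m b) ∂μ :=
    covariance_eq_integral_mul_of_integral_eq_zero (hX a) (hY b) (hY₀ b)
  have hAcov : A = covMatrix Y Y μ := by
    ext c d
    exact (hA c d).trans
      (covariance_eq_integral_mul_of_integral_eq_zero (hY c) (hY d) (hY₀ d)).symm
  set W : Ω → ι → ℝ := fun ω => (covMatrix X Y μ * (covMatrix Y Y μ)⁻¹) *ᵥ Y ω
  have hQW : Q =ᵐ[μ] W := by
    filter_upwards [ae_all_iff.mpr hQ] with ω hω
    ext a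
    simp only [hω, W, Y, mulVec, dotProduct, mul_apply, hC, hAcov, Finset.sum_mul, Pi.sub_apply]
    exact Finset.sum_comm
  have hXW : (fun ω => X ω - Q ω) =ᵐ[μ] fun ω => X ω - W ω :=
    hQW.mono fun ω h => congrArg (X ω - ·) h
  have hXQ a : MemLp (fun ω => (X ω - Q ω) a) 2 μ :=
    ((hX a).sub (memLp_mulVec hY _ a)).ae_eq (hXW.mono fun ω h => congrFun h.symm a)
  have hmoments : (of fun a b => (∫ ω, (X ω a - Q ω a) * (X ω b - Q ω b) ∂μ)
      - (∫ ω, X ω a - Q ω a ∂μ) * (∫ ω, X ω b - Q ω b ∂μ))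
      = covMatrix (fun ω => X ω - Q ω) (fun ω => X ω - Q ω) μ :=
    (covMatrix_self_eq hXQ).symm
  rw [← covMatrix_self_eq hX, hmoments, covMatrix_congr_ae hXW hXW]
  exact posSemidef_covMatrix_sub_regression hX hY

end ProbabilityMeasure

end ProbabilityTheory

theorem within_stratum_centered_calibration_improves_general
    {Ω 𝒱 : Type*} [MeasurableSpace Ω] [MeasurableSpace 𝒱]
    (μ : Measure Ω) [IsProbabilityMeasure μ]
    (V : Ω → 𝒱) (hV : Measurable V)
    (J p k : ℕ)
    (Vset : Fin J → Set 𝒱) (hVmeas : ∀ j, MeasurableSet (Vset j))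
    (ν : Fin J → ℝ) (hν : ∀ j, ν j = (μ (V ⁻¹' Vset j)).toReal)
    (hνpos : ∀ j, 0 < ν j)
    (pj : Fin J → ℝ) (hpj : ∀ j, pj j ∈ Set.Ioo (0 : ℝ) 1)
    (ℓ : Ω → Fin p → ℝ) (hℓ : ∀ a, MemLp (fun ω => ℓ ω a) 2 μ)
    (I₀inv : Matrix (Fin p) (Fin p) ℝ)
    (Z : Ω → Fin k → ℝ)
    (hZmeas : ∀ a, Measurable fun ω => Z ω a)
    (CZ : ℝ) (hZbd : ∀ ω a, |Z ω a| ≤ CZ)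
    (μZ : Fin J → Fin k → ℝ)
    (hμZ : ∀ j a, μZ j a = ∫ ω, Z ω a ∂(μ[|V ⁻¹' Vset j]))
    (A : Fin J → Matrix (Fin k) (Fin k) ℝ)
    (hA : ∀ j a b, A j a b =
      ∫ ω, (Z ω a - μZ j a) * (Z ω b - μZ j b) ∂(μ[|V ⁻¹' Vset j]))
    (Q : Fin J → Ω → Fin p → ℝ)
    (hQ : ∀ j ω a, Q j ω a =
      ∑ b, ∑ c, (∫ ω', ℓ ω' a * (Z ω' b - μZ j b) ∂(μ[|V ⁻¹' Vset j])) * (A j)⁻¹ b c *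
        ((Vset j).indicator (fun _ => (1 : ℝ)) (V ω) * (Z ω c - μZ j c))) :
    -- Σ − Σ_cc is positive semidefinite, equivalently aᵀ Σ_cc a ≤ aᵀ Σ a
    ((Matrix.of fun a b =>
        I₀inv a b + ∑ j, ν j * ((1 - pj j) / pj j) *
          ((∫ ω, ℓ ω a * ℓ ω b ∂(μ[|V ⁻¹' Vset j]))
            - (∫ ω, ℓ ω a ∂(μ[|V ⁻¹' Vset j])) * (∫ ω, ℓ ω b ∂(μ[|V ⁻¹' Vset j]))))
      - (Matrix.of fun a b =>
          I₀inv a b + ∑ j, ν j * ((1 - pj j) / pj j) *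
            ((∫ ω, (ℓ ω a - Q j ω a) * (ℓ ω b - Q j ω b) ∂(μ[|V ⁻¹' Vset j]))
              - (∫ ω, ℓ ω a - Q j ω a ∂(μ[|V ⁻¹' Vset j]))
                * (∫ ω, ℓ ω b - Q j ω b ∂(μ[|V ⁻¹' Vset j]))))).PosSemidef
    ∧ ∀ a : Fin p → ℝ,
        a ⬝ᵥ (Matrix.of fun i i' =>
            I₀inv i i' + ∑ j, ν j * ((1 - pj j) / pj j) *
              ((∫ ω, (ℓ ω i - Q j ω i) * (ℓ ω i' - Q j ω i') ∂(μ[|V ⁻¹' Vset j]))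
                - (∫ ω, ℓ ω i - Q j ω i ∂(μ[|V ⁻¹' Vset j]))
                  * (∫ ω, ℓ ω i' - Q j ω i' ∂(μ[|V ⁻¹' Vset j])))).mulVec a
        ≤ a ⬝ᵥ (Matrix.of fun i i' =>
            I₀inv i i' + ∑ j, ν j * ((1 - pj j) / pj j) *
              ((∫ ω, ℓ ω i * ℓ ω i' ∂(μ[|V ⁻¹' Vset j]))
                - (∫ ω, ℓ ω i ∂(μ[|V ⁻¹' Vset j]))
                  * (∫ ω, ℓ ω i' ∂(μ[|V ⁻¹' Vset j])))).mulVec a := by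
  refine ⟨?psd, fun x => PosSemidef.dotProduct_mulVec_le ?psd x⟩
  have hw j : 0 ≤ ν j * ((1 - pj j) / pj j) :=
    mul_nonneg (hνpos j).le (div_nonneg (sub_nonneg.2 (hpj j).2.le) (hpj j).1.le)
  refine posSemidef_of_add_sum_sub_of_add_sum I₀inv hw fun j => ?_
  have hstratum : μ (V ⁻¹' Vset j) ≠ 0 := fun h => by simpa [hν j, h] using hνpos j
  have := cond_isProbabilityMeasure (μ := μ) hstratum
  have hℓj a : MemLp (fun ω => ℓ ω a) 2 μ[|V ⁻¹' Vset j] :=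
    ((hℓ a).restrict _).smul_measure (ENNReal.inv_ne_top.mpr hstratum)
  refine posSemidef_sub_of_centered_calibration hℓj
    (fun c => .of_bound (hZmeas c).aestronglyMeasurable CZ (.of_forall fun ω => hZbd ω c))
    (hμZ j) (hA j) fun a => ?_
  filter_upwards [ae_cond_mem (hV (hVmeas j))] with ω hω
  simp only [hQ j ω a, Set.indicator_of_mem (Set.mem_preimage.mp hω), one_mul]

/-- Guaranteed improvement of within-stratum centered calibration under sampling
without replacement: `Σ − Σ_cc = Σ_j ν_j ((1−p_j)/p_j) Var_{0|j}(Q_cc^{(j)}ℓ̃₀)` is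
positive semidefinite; equivalently `aᵀ Σ_cc a ≤ aᵀ Σ a` for every `a ∈ ℝ^p`. -/
theorem within_stratum_centered_calibration_improves
    {Ω 𝒱 : Type*} [MeasurableSpace Ω] [MeasurableSpace 𝒱]
    (μ : Measure Ω) [IsProbabilityMeasure μ]
    (V : Ω → 𝒱) (hV : Measurable V)
    (J p k : ℕ)
    (Vset : Fin J → Set 𝒱) (hVmeas : ∀ j, MeasurableSet (Vset j))
    (hdisj : Pairwise (Function.onFun Disjoint Vset))
    (hcover : (⋃ j, Vset j) = Set.univ)
    (ν : Fin J → ℝ) (hν : ∀ j, ν j = (μ (V ⁻¹' Vset j)).toReal)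
    (hνpos : ∀ j, 0 < ν j)
    (pj : Fin J → ℝ) (hpj : ∀ j, pj j ∈ Set.Ioo (0 : ℝ) 1)
    (ℓ : Ω → Fin p → ℝ) (hℓ : ∀ a, MemLp (fun ω => ℓ ω a) 2 μ)
    (I₀inv : Matrix (Fin p) (Fin p) ℝ) (hI₀inv : I₀inv.IsSymm)
    (g : 𝒱 → Fin k → ℝ) (Z : Ω → Fin k → ℝ) (hZ : ∀ ω, Z ω = g (V ω))
    (hZmeas : ∀ a, Measurable fun ω => Z ω a)
    (CZ : ℝ) (hZbd : ∀ ω a, |Z ω a| ≤ CZ)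
    (μZ : Fin J → Fin k → ℝ)
    (hμZ : ∀ j a, μZ j a = ∫ ω, Z ω a ∂(μ[|V ⁻¹' Vset j]))
    (A : Fin J → Matrix (Fin k) (Fin k) ℝ)
    (hA : ∀ j a b, A j a b =
      ∫ ω, (Z ω a - μZ j a) * (Z ω b - μZ j b) ∂(μ[|V ⁻¹' Vset j]))
    (hAinv : ∀ j, IsUnit (A j).det)
    (Q : Fin J → Ω → Fin p → ℝ)
    (hQ : ∀ j ω a, Q j ω a =
      ∑ b, ∑ c, (∫ ω', ℓ ω' a * (Z ω' b - μZ j b) ∂(μ[|V ⁻¹' Vset j])) * (A j)⁻¹ b c *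
        ((Vset j).indicator (fun _ => (1 : ℝ)) (V ω) * (Z ω c - μZ j c))) :
    -- Σ − Σ_cc is positive semidefinite, equivalently aᵀ Σ_cc a ≤ aᵀ Σ a
    ((Matrix.of fun a b =>
        I₀inv a b + ∑ j, ν j * ((1 - pj j) / pj j) *
          ((∫ ω, ℓ ω a * ℓ ω b ∂(μ[|V ⁻¹' Vset j]))
            - (∫ ω, ℓ ω a ∂(μ[|V ⁻¹' Vset j])) * (∫ ω, ℓ ω b ∂(μ[|V ⁻¹' Vset j]))))
      - (Matrix.of fun a b =>
          I₀inv a b + ∑ j, ν j * ((1 - pj j) / pj j) *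
            ((∫ ω, (ℓ ω a - Q j ω a) * (ℓ ω b - Q j ω b) ∂(μ[|V ⁻¹' Vset j]))
              - (∫ ω, ℓ ω a - Q j ω a ∂(μ[|V ⁻¹' Vset j]))
                * (∫ ω, ℓ ω b - Q j ω b ∂(μ[|V ⁻¹' Vset j]))))).PosSemidef
    ∧ ∀ a : Fin p → ℝ,
        a ⬝ᵥ (Matrix.of fun i i' =>
            I₀inv i i' + ∑ j, ν j * ((1 - pj j) / pj j) *
              ((∫ ω, (ℓ ω i - Q j ω i) * (ℓ ω i' - Q j ω i') ∂(μ[|V ⁻¹' Vset j]))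
                - (∫ ω, ℓ ω i - Q j ω i ∂(μ[|V ⁻¹' Vset j]))
                  * (∫ ω, ℓ ω i' - Q j ω i' ∂(μ[|V ⁻¹' Vset j])))).mulVec a
        ≤ a ⬝ᵥ (Matrix.of fun i i' =>
            I₀inv i i' + ∑ j, ν j * ((1 - pj j) / pj j) *
              ((∫ ω, ℓ ω i * ℓ ω i' ∂(μ[|V ⁻¹' Vset j]))
                - (∫ ω, ℓ ω i ∂(μ[|V ⁻¹' Vset j]))
                  * (∫ ω, ℓ ω i' ∂(μ[|V ⁻¹' Vset j])))).mulVec a :=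
  within_stratum_centered_calibration_improves_general μ V hV J p k Vset hVmeas ν hν hνpos pj hpj ℓ
    hℓ I₀inv Z hZmeas CZ hZbd μZ hμZ A hA Q hQ
end

section
/- (Lemma 5.2, weighted Kullback–Leibler / Hellinger bound for calibrated log-likelihoods.) There exist constants K₁ > 0 and K₂ < ∞, depending only on c₀, C_Z, m₁, M₁, M₂, such that for all θ ∈ Θ and all α ∈ ℝ^k: E[ G(Zᵀα) ( log p_θ(X) − log p_{θ₀}(X) ) ] ≤ −K₁ h(θ, θ₀)² + K₂ |α|². -/
/-! With `L = log p_θ − log p_{θ₀}` and `t = M₂ C_Z |α|`, the mean value theorem gives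
`|G(Zᵀα) − 1| ≤ t`, so the weighted log-likelihood is at most `E L(X) + t E|L(X)|`.
Applying `log u ≤ u − 1` to `u = √(p_θ / p_{θ₀})` gives `E L(X) ≤ −2h²`. The ratio bound
yields `|L| √p_{θ₀} ≤ 2√c₀ |√p_θ − √p_{θ₀}|`, so by AM–GM `t E|L(X)| ≤ h² + 2c₀t²`.
Hence `K₁ = 1` and `K₂ = 2c₀M₂²C_Z²`. -/

open MeasureTheory Finset Real

section LogRatio

variable {a b c : ℝ}

lemma abs_log_sub_log_mul_le_of_le_mul {u v d : ℝ} (hu : 0 < u) (hv : 0 < v) (hd : 1 ≤ d)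
    (hvu : v ≤ d * u) : |log u - log v| * v ≤ d * |u - v| := by
  have hlog (x y : ℝ) (hx : 0 < x) (hy : 0 < y) : log x - log y ≤ x / y - 1 := by
    rw [← log_div hx.ne' hy.ne']
    exact log_le_sub_one_of_pos (div_pos hx hy)
  rcases le_total v u with hle | hle
  · rw [abs_of_nonneg (sub_nonneg.2 (log_le_log hv hle)), abs_of_nonneg (sub_nonneg.2 hle)]
    calc (log u - log v) * v ≤ (u / v - 1) * v := mul_le_mul_of_nonneg_right (hlog u v hu hv) hv.le
      _ = 1 * (u - v) := by field_simp
      _ ≤ d * (u - v) := by gcongr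
  · rw [abs_sub_comm, abs_of_nonneg (sub_nonneg.2 (log_le_log hu hle)), abs_sub_comm,
      abs_of_nonneg (sub_nonneg.2 hle)]
    calc (log v - log u) * v ≤ (v / u - 1) * v := mul_le_mul_of_nonneg_right (hlog v u hv hu) hv.le
      _ = (v - u) * (v / u) := by field_simp
      _ ≤ (v - u) * d :=
        mul_le_mul_of_nonneg_left (by rwa [div_le_iff₀ hu]) (sub_nonneg.2 hle)
      _ = d * (v - u) := mul_comm _ _

lemma abs_log_sub_log_le_log (ha : 0 ≤ a) (hb : 0 ≤ b) (hc : 1 ≤ c) (hab : a ≤ c * b)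
    (hba : b ≤ c * a) : |log a - log b| ≤ log c := by
  rcases hb.eq_or_lt with rfl | hb
  · simp [le_antisymm (by simpa using hab) ha, log_nonneg hc]
  have ha : 0 < a := ha.lt_of_ne (by rintro rfl; linarith [hba.trans_eq (mul_zero c)])
  have hc0 : 0 < c := by linarith
  rw [abs_le]
  constructor
  · linarith [log_le_log hb hba, log_mul hc0.ne' ha.ne']
  · linarith [log_le_log ha hab, log_mul hc0.ne' hb.ne']

lemma log_sub_log_mul_le (ha : 0 ≤ a) (hb : 0 ≤ b) (hba : b ≤ c * a) :
    (log a - log b) * b ≤ 2 * (√a * √b - b) := by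
  rcases hb.eq_or_lt with rfl | hb
  · simp
  have ha : 0 < a := ha.lt_of_ne (by rintro rfl; linarith [hba.trans_eq (mul_zero c)])
  have hsa := sqrt_pos.2 ha
  have hsb := sqrt_pos.2 hb
  have hsb2 : √b ^ 2 = b := sq_sqrt hb.le
  calc (log a - log b) * b = 2 * log (√a / √b) * √b ^ 2 := by
        rw [log_div hsa.ne' hsb.ne', log_sqrt ha.le, log_sqrt hb.le, hsb2]; ring
    _ ≤ 2 * (√a / √b - 1) * √b ^ 2 := by gcongr; exact log_le_sub_one_of_pos (div_pos hsa hsb)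
    _ = 2 * (√a * √b - b) := by field_simp; rw [mul_sub, mul_self_sqrt hb.le]; ring

lemma mul_abs_log_sub_log_mul_le {t : ℝ} (ht : 0 ≤ t) (ha : 0 ≤ a) (hb : 0 ≤ b) (hc : 1 ≤ c)
    (hba : b ≤ c * a) :
    t * (|log a - log b| * b) ≤ (√a - √b) ^ 2 / 2 + 2 * c * t ^ 2 * b := by
  rcases hb.eq_or_lt with rfl | hb
  · simp only [mul_zero, sqrt_zero, sub_zero]; positivity
  have ha : 0 < a := ha.lt_of_ne (by rintro rfl; linarith [hba.trans_eq (mul_zero c)])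
  have hsb2 : √b ^ 2 = b := sq_sqrt hb.le
  have hsc2 : √c ^ 2 = c := sq_sqrt (by linarith)
  have hkey : |log a - log b| * √b ≤ 2 * √c * |√a - √b| := by
    have h := abs_log_sub_log_mul_le_of_le_mul (sqrt_pos.2 ha) (sqrt_pos.2 hb)
      (one_le_sqrt.2 hc) (by rw [← sqrt_mul (by linarith)]; exact sqrt_le_sqrt hba)
    rw [log_sqrt ha.le, log_sqrt hb.le, ← sub_div, abs_div, abs_two] at h
    linarith
  have hAM := two_mul_le_add_sq |√a - √b| (2 * √c * t * √b)
  rw [sq_abs, mul_pow, mul_pow, mul_pow, hsc2, hsb2] at hAM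
  calc t * (|log a - log b| * b) = t * √b * (|log a - log b| * √b) := by
        linear_combination (-(t * |log a - log b|)) * mul_self_sqrt hb.le
    _ ≤ t * √b * (2 * √c * |√a - √b|) := by gcongr
    _ ≤ (√a - √b) ^ 2 / 2 + 2 * c * t ^ 2 * b := by linarith

end LogRatio

section Densities

variable {𝒳 : Type*} [MeasurableSpace 𝒳] {μ : Measure 𝒳} {p q : 𝒳 → ℝ} {c : ℝ}

lemma integrable_sqrt_mul_sqrt (hp : Integrable p μ) (hq : Integrable q μ) (hp0 : ∀ x, 0 ≤ p x)
    (hq0 : ∀ x, 0 ≤ q x) : Integrable (fun x => √(p x) * √(q x)) μ := by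
  refine (hp.add hq).mono' ((continuous_sqrt.comp_aestronglyMeasurable hp.1).mul
    (continuous_sqrt.comp_aestronglyMeasurable hq.1)) (ae_of_all μ fun x => ?_)
  rw [Pi.add_apply, norm_of_nonneg (by positivity)]
  nlinarith [sq_sqrt (hp0 x), sq_sqrt (hq0 x), sq_nonneg (√(p x) - √(q x))]

lemma sqrt_sub_sqrt_sq {a b : ℝ} (ha : 0 ≤ a) (hb : 0 ≤ b) :
    (√a - √b) ^ 2 = a + b - 2 * (√a * √b) := by
  rw [sub_sq, sq_sqrt ha, sq_sqrt hb]; ring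

lemma integrable_sqrt_sub_sqrt_sq (hp : Integrable p μ) (hq : Integrable q μ)
    (hp0 : ∀ x, 0 ≤ p x) (hq0 : ∀ x, 0 ≤ q x) :
    Integrable (fun x => (√(p x) - √(q x)) ^ 2) μ :=
  ((hp.add hq).sub ((integrable_sqrt_mul_sqrt hp hq hp0 hq0).const_mul 2)).congr
    (ae_of_all μ fun x => (sqrt_sub_sqrt_sq (hp0 x) (hq0 x)).symm)

lemma integral_sqrt_sub_sqrt_sq (hp : Integrable p μ) (hq : Integrable q μ)
    (hp0 : ∀ x, 0 ≤ p x) (hq0 : ∀ x, 0 ≤ q x) :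
    ∫ x, (√(p x) - √(q x)) ^ 2 ∂μ = ∫ x, p x ∂μ + ∫ x, q x ∂μ - 2 * ∫ x, √(p x) * √(q x) ∂μ := by
  simp_rw [sqrt_sub_sqrt_sq (hp0 _) (hq0 _)]
  rw [integral_sub (f := fun x => p x + q x) (hp.add hq)
    ((integrable_sqrt_mul_sqrt hp hq hp0 hq0).const_mul 2), integral_add hp hq, integral_const_mul]

lemma integrable_log_sub_log_mul (hp : Integrable p μ) (hq : Integrable q μ) (hp0 : ∀ x, 0 ≤ p x)
    (hq0 : ∀ x, 0 ≤ q x) (hc : 1 ≤ c) (hratio : ∀ᵐ x ∂μ, p x ≤ c * q x ∧ q x ≤ c * p x) :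
    Integrable (fun x => (log (p x) - log (q x)) * q x) μ := by
  refine (hq.const_mul (log c)).mono'
    ((hp.1.aemeasurable.log.sub hq.1.aemeasurable.log).mul hq.1.aemeasurable).aestronglyMeasurable
    (hratio.mono fun x hx => ?_)
  rw [norm_mul, norm_of_nonneg (hq0 x)]
  exact mul_le_mul_of_nonneg_right
    (abs_log_sub_log_le_log (hp0 x) (hq0 x) hc hx.1 hx.2) (hq0 x)

lemma integral_log_sub_log_mul_le (hp : Integrable p μ) (hq : Integrable q μ) (hp0 : ∀ x, 0 ≤ p x)
    (hq0 : ∀ x, 0 ≤ q x) (hc : 1 ≤ c) (hratio : ∀ᵐ x ∂μ, p x ≤ c * q x ∧ q x ≤ c * p x) :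
    ∫ x, (log (p x) - log (q x)) * q x ∂μ
      ≤ ∫ x, p x ∂μ - ∫ x, q x ∂μ - ∫ x, (√(p x) - √(q x)) ^ 2 ∂μ := by
  have hpq := integrable_sqrt_mul_sqrt hp hq hp0 hq0
  calc ∫ x, (log (p x) - log (q x)) * q x ∂μ ≤ ∫ x, 2 * (√(p x) * √(q x) - q x) ∂μ :=
        integral_mono_ae (integrable_log_sub_log_mul hp hq hp0 hq0 hc hratio)
          ((hpq.sub hq).const_mul 2)
          (hratio.mono fun x hx => log_sub_log_mul_le (hp0 x) (hq0 x) hx.2)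
    _ = _ := by
        rw [integral_const_mul, integral_sub hpq hq, integral_sqrt_sub_sqrt_sq hp hq hp0 hq0]
        ring

lemma mul_integral_abs_log_sub_log_mul_le {t : ℝ} (ht : 0 ≤ t) (hp : Integrable p μ)
    (hq : Integrable q μ) (hp0 : ∀ x, 0 ≤ p x) (hq0 : ∀ x, 0 ≤ q x) (hc : 1 ≤ c)
    (hratio : ∀ᵐ x ∂μ, p x ≤ c * q x ∧ q x ≤ c * p x) :
    t * ∫ x, |log (p x) - log (q x)| * q x ∂μ
      ≤ (∫ x, (√(p x) - √(q x)) ^ 2 ∂μ) / 2 + 2 * c * t ^ 2 * ∫ x, q x ∂μ := by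
  have habs : Integrable (fun x => |log (p x) - log (q x)| * q x) μ :=
    (integrable_log_sub_log_mul hp hq hp0 hq0 hc hratio).abs.congr
      (ae_of_all μ fun x => by simp only [abs_mul, abs_of_nonneg (hq0 x)])
  have hsq := integrable_sqrt_sub_sqrt_sq hp hq hp0 hq0
  rw [← integral_const_mul, ← integral_div, ← integral_const_mul,
    ← integral_add (hsq.div_const 2) (hq.const_mul _)]
  exact integral_mono_ae (habs.const_mul t) ((hsq.div_const 2).add (hq.const_mul _))
    (hratio.mono fun x hx => mul_abs_log_sub_log_mul_le ht (hp0 x) (hq0 x) hc hx.2)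

lemma integral_log_sub_log_mul_add_mul_integral_abs_le {t : ℝ} (ht : 0 ≤ t)
    (hp : Integrable p μ) (hq : Integrable q μ) (hp0 : ∀ x, 0 ≤ p x) (hq0 : ∀ x, 0 ≤ q x)
    (hp1 : ∫ x, p x ∂μ = 1) (hq1 : ∫ x, q x ∂μ = 1) (hc : 1 ≤ c)
    (hratio : ∀ᵐ x ∂μ, p x ≤ c * q x ∧ q x ≤ c * p x) :
    ∫ x, (log (p x) - log (q x)) * q x ∂μ + t * ∫ x, |log (p x) - log (q x)| * q x ∂μ
      ≤ -(1 / 2 * ∫ x, (√(p x) - √(q x)) ^ 2 ∂μ) + 2 * c * t ^ 2 := by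
  have h₁ := integral_log_sub_log_mul_le hp hq hp0 hq0 hc hratio
  have h₂ := mul_integral_abs_log_sub_log_mul_le ht hp hq hp0 hq0 hc hratio
  rw [hp1, hq1] at h₁
  rw [hq1] at h₂
  linarith

lemma integral_eq_one_of_lintegral_ofReal_eq_one (hp : Measurable p) (hp0 : ∀ x, 0 ≤ p x)
    (hp1 : ∫⁻ x, ENNReal.ofReal (p x) ∂μ = 1) : ∫ x, p x ∂μ = 1 := by
  rw [integral_eq_lintegral_of_nonneg_ae (ae_of_all μ hp0) hp.aestronglyMeasurable, hp1,
    ENNReal.toReal_one]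

end Densities

section Law

variable {Ω 𝒳 : Type*} [MeasurableSpace Ω] [MeasurableSpace 𝒳] {P : Measure Ω} {μ : Measure 𝒳}
  {X : Ω → 𝒳} {q φ : 𝒳 → ℝ}

lemma integrable_comp_iff_of_map_eq_withDensity (hX : Measurable X) (hq : Measurable q)
    (hq0 : ∀ x, 0 ≤ q x) (hlaw : P.map X = μ.withDensity fun x => ENNReal.ofReal (q x))
    (hφ : Measurable φ) :
    Integrable (fun ω => φ (X ω)) P ↔ Integrable (fun x => φ x * q x) μ := by
  rw [← Function.comp_def, ← integrable_map_measure hφ.aestronglyMeasurable hX.aemeasurable, hlaw,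
    integrable_withDensity_iff hq.ennreal_ofReal (ae_of_all μ fun _ => ENNReal.ofReal_lt_top)]
  simp only [ENNReal.toReal_ofReal (hq0 _)]

lemma integral_comp_eq_of_map_eq_withDensity (hX : Measurable X) (hq : Measurable q)
    (hq0 : ∀ x, 0 ≤ q x) (hlaw : P.map X = μ.withDensity fun x => ENNReal.ofReal (q x))
    (hφ : Measurable φ) :
    ∫ ω, φ (X ω) ∂P = ∫ x, φ x * q x ∂μ := by
  rw [← integral_map hX.aemeasurable hφ.aestronglyMeasurable, hlaw,
    integral_withDensity_eq_integral_toReal_smul hq.ennreal_ofReal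
      (ae_of_all μ fun _ => ENNReal.ofReal_lt_top)]
  simp only [ENNReal.toReal_ofReal (hq0 _), smul_eq_mul, mul_comm]

lemma integral_mul_le_integral_add_mul_integral_abs {W f : Ω → ℝ} {t : ℝ}
    (hW : AEStronglyMeasurable W P) (hf : Integrable f P) (hWt : ∀ᵐ ω ∂P, |W ω - 1| ≤ t) :
    ∫ ω, W ω * f ω ∂P ≤ ∫ ω, f ω ∂P + t * ∫ ω, |f ω| ∂P := by
  have hWf : Integrable (fun ω => W ω * f ω) P :=
    (hf.abs.const_mul (1 + t)).mono' (hW.mul hf.1) (hWt.mono fun ω hω => by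
      rw [norm_mul, norm_eq_abs, norm_eq_abs]
      refine mul_le_mul_of_nonneg_right ?_ (abs_nonneg _)
      linarith [abs_sub_abs_le_abs_sub (W ω) (1 : ℝ), abs_one (α := ℝ)])
  rw [← integral_const_mul, ← integral_add hf (hf.abs.const_mul t)]
  refine integral_mono_ae hWf (hf.add (hf.abs.const_mul t)) (hWt.mono fun ω hω => ?_)
  have h := mul_le_mul_of_nonneg_right hω (abs_nonneg (f ω))
  show W ω * f ω ≤ f ω + t * |f ω|
  nlinarith [le_abs_self ((W ω - 1) * f ω), abs_mul (W ω - 1) (f ω)]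

lemma integral_mul_comp_le_of_map_eq_withDensity {W : Ω → ℝ} {t : ℝ}
    (hW : AEStronglyMeasurable W P) (hWt : ∀ᵐ ω ∂P, |W ω - 1| ≤ t) (hX : Measurable X)
    (hq : Measurable q) (hq0 : ∀ x, 0 ≤ q x)
    (hlaw : P.map X = μ.withDensity fun x => ENNReal.ofReal (q x)) (hφ : Measurable φ)
    (hφq : Integrable (fun x => φ x * q x) μ) :
    ∫ ω, W ω * φ (X ω) ∂P ≤ ∫ x, φ x * q x ∂μ + t * ∫ x, |φ x| * q x ∂μ := by
  rw [← integral_comp_eq_of_map_eq_withDensity hX hq hq0 hlaw hφ,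
    ← integral_comp_eq_of_map_eq_withDensity hX hq hq0 hlaw hφ.abs]
  exact integral_mul_le_integral_add_mul_integral_abs hW
    ((integrable_comp_iff_of_map_eq_withDensity hX hq hq0 hlaw hφ).2 hφq) hWt

end Law

lemma abs_sub_le_mul_abs_sub_of_hasDerivAt {f f' : ℝ → ℝ} {M : ℝ}
    (hf : ∀ x, HasDerivAt f (f' x) x) (hf' : ∀ x, |f' x| ≤ M) (x y : ℝ) :
    |f y - f x| ≤ M * |y - x| :=
  convex_univ.norm_image_sub_le_of_norm_hasDerivWithin_le (fun x _ => (hf x).hasDerivWithinAt)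
    (fun x _ => hf' x) (Set.mem_univ x) (Set.mem_univ y)

lemma abs_sum_mul_le_sqrt {ι : Type*} {s : Finset ι} {z α : ι → ℝ} {C : ℝ}
    (hz : ∑ i ∈ s, z i ^ 2 ≤ C ^ 2) : |∑ i ∈ s, z i * α i| ≤ √(C ^ 2 * ∑ i ∈ s, α i ^ 2) :=
  abs_le_sqrt ((sum_mul_sq_le_sq_mul_sq _ _ _).trans
    (mul_le_mul_of_nonneg_right hz (sum_nonneg fun i _ => sq_nonneg (α i))))

theorem weighted_KL_Hellinger_bound_general
    {𝒳 Θ Ω : Type*} [MeasurableSpace 𝒳] [MeasurableSpace Ω]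
    (k : ℕ)
    (μ : Measure 𝒳)
    (p : Θ → 𝒳 → ℝ) (θ₀ : Θ)
    (hpmeas : ∀ θ, Measurable (p θ))
    (hpnonneg : ∀ θ x, 0 ≤ p θ x)
    (hpdens : ∀ θ, ∫⁻ x, ENNReal.ofReal (p θ x) ∂μ = 1)
    (c₀ : ℝ) (hc₀ : 1 ≤ c₀)
    (hratio : ∀ θ, ∀ᵐ x ∂μ, p θ x ≤ c₀ * p θ₀ x ∧ p θ₀ x ≤ c₀ * p θ x)
    -- the probability space carrying `(V, X)` with `X ∼ p_{θ₀} dμ`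
    (P : Measure Ω)
    (X : Ω → 𝒳) (hX : Measurable X)
    (hXlaw : P.map X = μ.withDensity (fun x => ENNReal.ofReal (p θ₀ x)))
    (Z : Ω → Fin k → ℝ)
    (hZmeas : ∀ a, Measurable fun ω => Z ω a)
    (CZ : ℝ) (hZbd : ∀ ω, ∑ a, (Z ω a) ^ 2 ≤ CZ ^ 2)
    -- the calibration link function `G` of Condition 2
    (G G' : ℝ → ℝ) (M₂ : ℝ)
    (hG0 : G 0 = 1)
    (hG : ∀ x, HasDerivAt G (G' x) x)
    (hG' : ∀ x, 0 < G' x ∧ G' x ≤ M₂) :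
    ∃ K₁ : ℝ, 0 < K₁ ∧ ∃ K₂ : ℝ, ∀ θ : Θ, ∀ α : Fin k → ℝ,
      ∫ ω, G (∑ a, Z ω a * α a) * (Real.log (p θ (X ω)) - Real.log (p θ₀ (X ω))) ∂P
        ≤ -K₁ * ((1 / 2) * ∫ x, (Real.sqrt (p θ x) - Real.sqrt (p θ₀ x)) ^ 2 ∂μ)
          + K₂ * (∑ a, (α a) ^ 2) := by
  have hint θ : Integrable (p θ) μ := (lintegral_ofReal_ne_top_iff_integrable
    (hpmeas θ).aestronglyMeasurable (ae_of_all μ (hpnonneg θ))).1 (by simp [hpdens θ])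
  have hone θ := integral_eq_one_of_lintegral_ofReal_eq_one (hpmeas θ) (hpnonneg θ) (hpdens θ)
  have hM₂ : 0 ≤ M₂ := (hG' 0).1.le.trans (hG' 0).2
  refine ⟨1, one_pos, 2 * c₀ * M₂ ^ 2 * CZ ^ 2, fun θ α => ?_⟩
  set t := M₂ * √(CZ ^ 2 * ∑ a, α a ^ 2) with ht
  set L : 𝒳 → ℝ := fun x => log (p θ x) - log (p θ₀ x)
  have hweight ω : |G (∑ a, Z ω a * α a) - 1| ≤ t := by
    have hlip := abs_sub_le_mul_abs_sub_of_hasDerivAt hG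
      (fun x => (abs_of_pos (hG' x).1).trans_le (hG' x).2) 0 (∑ a, Z ω a * α a)
    rw [hG0, sub_zero] at hlip
    exact hlip.trans (mul_le_mul_of_nonneg_left (abs_sum_mul_le_sqrt (hZbd ω)) hM₂)
  have hGZ : Measurable fun ω => G (∑ a, Z ω a * α a) :=
    (continuous_iff_continuousAt.2 fun x => (hG x).continuousAt).measurable.comp
      (Finset.measurable_sum _ fun a _ => (hZmeas a).mul_const (α a))
  calc ∫ ω, G (∑ a, Z ω a * α a) * L (X ω) ∂P
      ≤ ∫ x, L x * p θ₀ x ∂μ + t * ∫ x, |L x| * p θ₀ x ∂μ :=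
        integral_mul_comp_le_of_map_eq_withDensity hGZ.aestronglyMeasurable (ae_of_all P hweight)
          hX (hpmeas θ₀) (hpnonneg θ₀) hXlaw ((hpmeas θ).log.sub (hpmeas θ₀).log)
          (integrable_log_sub_log_mul (hint θ) (hint θ₀) (hpnonneg θ) (hpnonneg θ₀) hc₀ (hratio θ))
    _ ≤ -(1 / 2 * ∫ x, (√(p θ x) - √(p θ₀ x)) ^ 2 ∂μ) + 2 * c₀ * t ^ 2 :=
        integral_log_sub_log_mul_add_mul_integral_abs_le (by positivity) (hint θ) (hint θ₀)
          (hpnonneg θ) (hpnonneg θ₀) (hone θ) (hone θ₀) hc₀ (hratio θ)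
    _ = _ := by rw [ht, mul_pow, sq_sqrt (by positivity)]; ring

/-- Lemma 5.2 (weighted Kullback–Leibler / Hellinger bound for calibrated
log-likelihoods): for a family of densities with likelihood ratios bounded between
`c₀⁻¹` and `c₀`, a bounded calibration variable `Z = g(V)` and a calibration link `G`
with `m₁ ≤ G ≤ M₁`, `G(0) = 1`, `0 < Ġ ≤ M₂`, there exist constants `K₁ > 0` and
`K₂ < ∞` such that for all `θ` and all `α ∈ ℝ^k`:
`E[G(Zᵀα)(log p_θ(X) − log p_{θ₀}(X))] ≤ −K₁ h(θ,θ₀)² + K₂|α|²`. -/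
theorem weighted_KL_Hellinger_bound
    {𝒳 Θ 𝒱 Ω : Type*} [MeasurableSpace 𝒳] [MeasurableSpace 𝒱] [MeasurableSpace Ω]
    (k : ℕ)
    (μ : Measure 𝒳) [SigmaFinite μ]
    (p : Θ → 𝒳 → ℝ) (θ₀ : Θ)
    (hpmeas : ∀ θ, Measurable (p θ))
    (hpnonneg : ∀ θ x, 0 ≤ p θ x)
    (hpdens : ∀ θ, ∫⁻ x, ENNReal.ofReal (p θ x) ∂μ = 1)
    (c₀ : ℝ) (hc₀ : 1 ≤ c₀)
    (hratio : ∀ θ, ∀ᵐ x ∂μ, p θ x ≤ c₀ * p θ₀ x ∧ p θ₀ x ≤ c₀ * p θ x)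
    -- the probability space carrying `(V, X)` with `X ∼ p_{θ₀} dμ`
    (P : Measure Ω) [IsProbabilityMeasure P]
    (V : Ω → 𝒱) (X : Ω → 𝒳) (hV : Measurable V) (hX : Measurable X)
    (hXlaw : P.map X = μ.withDensity (fun x => ENNReal.ofReal (p θ₀ x)))
    (g : 𝒱 → Fin k → ℝ) (Z : Ω → Fin k → ℝ) (hZ : ∀ ω, Z ω = g (V ω))
    (hZmeas : ∀ a, Measurable fun ω => Z ω a)
    (CZ : ℝ) (hZbd : ∀ ω, ∑ a, (Z ω a) ^ 2 ≤ CZ ^ 2)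
    -- the calibration link function `G` of Condition 2
    (G G' : ℝ → ℝ) (m₁ M₁ M₂ : ℝ) (hm₁ : 0 < m₁) (hM₁ : m₁ ≤ M₁)
    (hGbd : ∀ x, G x ∈ Set.Icc m₁ M₁) (hG0 : G 0 = 1)
    (hG : ∀ x, HasDerivAt G (G' x) x)
    (hG' : ∀ x, 0 < G' x ∧ G' x ≤ M₂) :
    ∃ K₁ : ℝ, 0 < K₁ ∧ ∃ K₂ : ℝ, ∀ θ : Θ, ∀ α : Fin k → ℝ,
      ∫ ω, G (∑ a, Z ω a * α a) * (Real.log (p θ (X ω)) - Real.log (p θ₀ (X ω))) ∂P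
        ≤ -K₁ * ((1 / 2) * ∫ x, (Real.sqrt (p θ x) - Real.sqrt (p θ₀ x)) ^ 2 ∂μ)
          + K₂ * (∑ a, (α a) ^ 2) :=
  weighted_KL_Hellinger_bound_general k μ p θ₀ hpmeas hpnonneg hpdens c₀ hc₀ hratio P X hX hXlaw Z
    hZmeas CZ hZbd G G' M₂ hG0 hG hG'
end

section
/- (Kullback–Leibler inequality from the consistency proof of Theorem 4.3.) Let μ be a σ-finite measure and let p₀ and p be nonnegative measurable functions with ∫ p₀ dμ = ∫ p dμ = 1; set P₀ := p₀ · μ. Then for every α ∈ (0,1): log(1−α) ≤ ∫ log( 1 − α + α (p/p₀) ) dP₀ ≤ 0, and the second inequality is an equality if and only if p = p₀ μ-almost everywhere. -/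
open MeasureTheory

/-!
The tangent-line bound `log y ≤ y - 1`, applied to `Y = 1 - α + α p/p₀`, gives
`∫ log Y dP₀ ≤ α (∫ p/p₀ dP₀ - 1) ≤ 0`, because `∫ p/p₀ dP₀` is the `μ`-mass of `p` on `{p₀ > 0}`.
In case of equality the tangent-line bound is attained, so `Y = 1` `P₀`-a.e., i.e. `p = p₀` on
`{p₀ > 0}`; since `p` and `p₀` have the same total mass, `p` then carries no mass on `{p₀ = 0}`.
-/

section LogLeSubOne

variable {Ω : Type*} [MeasurableSpace Ω] {μ : Measure Ω} {Y : Ω → ℝ}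

theorem integral_log_le_integral_sub_one (hY : ∀ᵐ x ∂μ, 0 < Y x)
    (hlog : Integrable (fun x => Real.log (Y x)) μ) (hY1 : Integrable (fun x => Y x - 1) μ) :
    ∫ x, Real.log (Y x) ∂μ ≤ ∫ x, (Y x - 1) ∂μ :=
  integral_mono_ae hlog hY1 (hY.mono fun _ => Real.log_le_sub_one_of_pos)

theorem integral_log_eq_integral_sub_one_iff (hY : ∀ᵐ x ∂μ, 0 < Y x)
    (hlog : Integrable (fun x => Real.log (Y x)) μ) (hY1 : Integrable (fun x => Y x - 1) μ) :
    ∫ x, Real.log (Y x) ∂μ = ∫ x, (Y x - 1) ∂μ ↔ Y =ᵐ[μ] 1 := by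
  have hgap : 0 ≤ᵐ[μ] fun x => Y x - 1 - Real.log (Y x) :=
    hY.mono fun x hx => sub_nonneg.2 (Real.log_le_sub_one_of_pos hx)
  rw [eq_comm, ← sub_eq_zero, ← integral_sub hY1 hlog,
    integral_eq_zero_iff_of_nonneg_ae hgap (hY1.sub hlog)]
  refine ⟨fun h => ?_, fun h => ?_⟩
  · filter_upwards [h, hY] with x hx hpos
    by_contra hne
    have := Real.log_lt_sub_one_of_pos hpos hne
    simp only [Pi.zero_apply] at hx
    linarith
  · filter_upwards [h] with x hx
    simp [hx]

end LogLeSubOne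

section Mixture

variable {Ω : Type*} [MeasurableSpace Ω] {P : Measure Ω} {g : Ω → ℝ} {α : ℝ}

theorem log_one_sub_le_log_mix (hα0 : 0 ≤ α) (hα1 : α < 1) {t : ℝ} (ht : 0 ≤ t) :
    Real.log (1 - α) ≤ Real.log (1 - α + α * t) :=
  Real.log_le_log (by linarith) (by nlinarith)

theorem one_sub_add_mul_pos (hα0 : 0 ≤ α) (hα1 : α < 1) {t : ℝ} (ht : 0 ≤ t) :
    0 < 1 - α + α * t := by
  nlinarith

theorem integrable_mix_sub_one [IsFiniteMeasure P] (hg : Integrable g P) :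
    Integrable (fun x => 1 - α + α * g x - 1) P :=
  ((integrable_const _).add (hg.const_mul α)).sub (integrable_const 1)

theorem integrable_log_mix [IsFiniteMeasure P] (hα0 : 0 ≤ α) (hα1 : α < 1) (hg0 : 0 ≤ᵐ[P] g)
    (hg : Integrable g P) : Integrable (fun x => Real.log (1 - α + α * g x)) P :=
  integrable_of_le_of_le
    (Real.measurable_log.comp_aemeasurable
      ((hg.aemeasurable.const_mul α).const_add _)).aestronglyMeasurable
    (hg0.mono fun _ => log_one_sub_le_log_mix hα0 hα1)
    (hg0.mono fun _ hx => Real.log_le_sub_one_of_pos (one_sub_add_mul_pos hα0 hα1 hx))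
    (integrable_const _) (integrable_mix_sub_one hg)

variable [IsProbabilityMeasure P]

theorem log_one_sub_le_integral_log_mix (hα0 : 0 ≤ α) (hα1 : α < 1) (hg0 : 0 ≤ᵐ[P] g)
    (hg : Integrable g P) : Real.log (1 - α) ≤ ∫ x, Real.log (1 - α + α * g x) ∂P := by
  simpa using integral_mono_ae (integrable_const _) (integrable_log_mix hα0 hα1 hg0 hg)
    (hg0.mono fun _ => log_one_sub_le_log_mix hα0 hα1)

theorem integral_mix_sub_one (hg : Integrable g P) :
    ∫ x, (1 - α + α * g x - 1) ∂P = α * (∫ x, g x ∂P - 1) := by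
  simp_rw [show ∀ x, 1 - α + α * g x - 1 = α * (g x - 1) from fun x => by ring]
  rw [integral_const_mul, integral_sub hg (integrable_const 1)]
  simp

theorem integral_log_mix_le (hα0 : 0 ≤ α) (hα1 : α < 1) (hg0 : 0 ≤ᵐ[P] g)
    (hg : Integrable g P) : ∫ x, Real.log (1 - α + α * g x) ∂P ≤ α * (∫ x, g x ∂P - 1) :=
  integral_mix_sub_one hg ▸ integral_log_le_integral_sub_one
    (hg0.mono fun _ => one_sub_add_mul_pos hα0 hα1) (integrable_log_mix hα0 hα1 hg0 hg)
    (integrable_mix_sub_one hg)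

theorem integral_log_mix_eq_zero_iff (hα0 : 0 < α) (hα1 : α < 1) (hg0 : 0 ≤ᵐ[P] g)
    (hg : Integrable g P) (hg1 : ∫ x, g x ∂P ≤ 1) :
    ∫ x, Real.log (1 - α + α * g x) ∂P = 0 ↔ g =ᵐ[P] 1 := by
  refine ⟨fun h0 => ?_, fun h1 => ?_⟩
  · have hle := integral_log_mix_le hα0.le hα1 hg0 hg
    have htight : ∫ x, Real.log (1 - α + α * g x) ∂P = ∫ x, (1 - α + α * g x - 1) ∂P := by
      rw [integral_mix_sub_one hg]
      nlinarith
    have hY1 := (integral_log_eq_integral_sub_one_iff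
      (hg0.mono fun _ => one_sub_add_mul_pos hα0.le hα1) (integrable_log_mix hα0.le hα1 hg0 hg)
      (integrable_mix_sub_one hg)).1 htight
    filter_upwards [hY1] with x hx
    have : α * (g x - 1) = 0 := by simp only [Pi.one_apply] at hx; linarith
    simpa [hα0.ne', sub_eq_zero] using this
  · calc ∫ x, Real.log (1 - α + α * g x) ∂P = ∫ _, (0 : ℝ) ∂P :=
          integral_congr_ae (h1.mono fun x hx => by simp [hx])
      _ = 0 := integral_zero _ _

end Mixture

section Density

variable {X : Type*} [MeasurableSpace X] {μ : Measure X} {p₀ p : X → ℝ}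

theorem isProbabilityMeasure_withDensity {f : X → ENNReal} (hf : ∫⁻ x, f x ∂μ = 1) :
    IsProbabilityMeasure (μ.withDensity f) :=
  ⟨by rw [withDensity_apply _ MeasurableSet.univ, Measure.restrict_univ, hf]⟩

theorem ENNReal.ofReal_mul_ofReal_div_le (a b : ℝ) :
    ENNReal.ofReal a * ENNReal.ofReal (b / a) ≤ ENNReal.ofReal b := by
  rcases le_or_gt a 0 with ha | ha
  · simp [ENNReal.ofReal_of_nonpos ha]
  · rw [← ENNReal.ofReal_mul ha.le, mul_div_cancel₀ _ ha.ne']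

theorem lintegral_ofReal_div_withDensity_le (hp₀ : Measurable p₀) :
    ∫⁻ x, ENNReal.ofReal (p x / p₀ x) ∂μ.withDensity (fun x => ENNReal.ofReal (p₀ x)) ≤
      ∫⁻ x, ENNReal.ofReal (p x) ∂μ :=
  (lintegral_withDensity_le_lintegral_mul μ hp₀.ennreal_ofReal _).trans
    (lintegral_mono fun x => ENNReal.ofReal_mul_ofReal_div_le (p₀ x) (p x))

theorem div_ae_eq_one_withDensity_iff (hp₀ : Measurable p₀) :
    (fun x => p x / p₀ x) =ᵐ[μ.withDensity fun x => ENNReal.ofReal (p₀ x)] 1 ↔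
      ∀ᵐ x ∂μ, 0 < p₀ x → p x = p₀ x := by
  rw [Filter.EventuallyEq, ae_withDensity_iff hp₀.ennreal_ofReal]
  simp only [ne_eq, ENNReal.ofReal_eq_zero, not_le, Pi.one_apply]
  exact Filter.eventually_congr (Filter.Eventually.of_forall fun x =>
    imp_congr_right fun h => div_eq_one_iff_eq h.ne')

theorem ae_eq_of_ae_pos_imp_eq_of_lintegral_le (hp : AEMeasurable p μ) (hp₀0 : 0 ≤ᵐ[μ] p₀)
    (hp0 : 0 ≤ᵐ[μ] p) (h : ∀ᵐ x ∂μ, 0 < p₀ x → p x = p₀ x)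
    (hint : ∫⁻ x, ENNReal.ofReal (p x) ∂μ ≤ ∫⁻ x, ENNReal.ofReal (p₀ x) ∂μ)
    (hfin : ∫⁻ x, ENNReal.ofReal (p₀ x) ∂μ ≠ ⊤) : p =ᵐ[μ] p₀ := by
  have hle : (fun x => ENNReal.ofReal (p₀ x)) ≤ᵐ[μ] fun x => ENNReal.ofReal (p x) := by
    filter_upwards [h] with x hx
    rcases le_or_gt (p₀ x) 0 with h0 | h0
    · simp [ENNReal.ofReal_of_nonpos h0]
    · rw [hx h0]
  filter_upwards [ae_eq_of_ae_le_of_lintegral_le hle hfin hp.ennreal_ofReal hint, hp₀0, hp0]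
    with x hx h0 h1
  exact ((ENNReal.ofReal_eq_ofReal_iff h0 h1).1 hx).symm

end Density

theorem kullback_leibler_inequality_general
    {𝒳 : Type*} [MeasurableSpace 𝒳] (μ : Measure 𝒳)
    (p₀ p : 𝒳 → ℝ) (hp₀meas : Measurable p₀) (hpmeas : Measurable p)
    (hp₀nonneg : ∀ x, 0 ≤ p₀ x) (hpnonneg : ∀ x, 0 ≤ p x)
    (hp₀int : ∫⁻ x, ENNReal.ofReal (p₀ x) ∂μ = 1)
    (hpint : ∫⁻ x, ENNReal.ofReal (p x) ∂μ = 1)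
    (P₀ : Measure 𝒳) (hP₀ : P₀ = μ.withDensity (fun x => ENNReal.ofReal (p₀ x)))
    (α : ℝ) (hα : α ∈ Set.Ioo (0 : ℝ) 1) :
    Real.log (1 - α) ≤ ∫ x, Real.log (1 - α + α * (p x / p₀ x)) ∂P₀
    ∧ ∫ x, Real.log (1 - α + α * (p x / p₀ x)) ∂P₀ ≤ 0
    ∧ ((∫ x, Real.log (1 - α + α * (p x / p₀ x)) ∂P₀) = 0 ↔ p =ᵐ[μ] p₀) := by
  obtain ⟨hα0, hα1⟩ := hα
  subst hP₀
  have := isProbabilityMeasure_withDensity hp₀int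
  have hg0 : 0 ≤ᵐ[μ.withDensity fun x => ENNReal.ofReal (p₀ x)] fun x => p x / p₀ x :=
    ae_of_all _ fun x => div_nonneg (hpnonneg x) (hp₀nonneg x)
  have hg_lint := hpint ▸ lintegral_ofReal_div_withDensity_le (p := p) hp₀meas
  have hg := (lintegral_ofReal_ne_top_iff_integrable
    (hpmeas.div hp₀meas).aestronglyMeasurable hg0).1 (ne_top_of_le_ne_top ENNReal.one_ne_top hg_lint)
  have hg1 : ∫ x, p x / p₀ x ∂μ.withDensity (fun x => ENNReal.ofReal (p₀ x)) ≤ 1 :=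
    ENNReal.ofReal_le_one.1 ((ofReal_integral_eq_lintegral_ofReal hg hg0).trans_le hg_lint)
  refine ⟨log_one_sub_le_integral_log_mix hα0.le hα1 hg0 hg,
    (integral_log_mix_le hα0.le hα1 hg0 hg).trans
      (mul_nonpos_of_nonneg_of_nonpos hα0.le (sub_nonpos.2 hg1)), ?_⟩
  rw [integral_log_mix_eq_zero_iff hα0 hα1 hg0 hg hg1, div_ae_eq_one_withDensity_iff hp₀meas]
  exact ⟨fun h => ae_eq_of_ae_pos_imp_eq_of_lintegral_le hpmeas.aemeasurable
    (ae_of_all _ hp₀nonneg) (ae_of_all _ hpnonneg) h (hpint.trans hp₀int.symm).le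
    (hp₀int ▸ ENNReal.one_ne_top), fun h => h.mono fun _ hx _ => hx⟩

/-- Kullback–Leibler inequality from the consistency proof of Theorem 4.3: for
densities `p₀`, `p` with respect to a σ-finite measure `μ` and `P₀ := p₀ · μ`, for
every `α ∈ (0,1)`,
`log(1−α) ≤ ∫ log(1 − α + α (p/p₀)) dP₀ ≤ 0`, with equality in the second inequality
if and only if `p = p₀` `μ`-almost everywhere. -/
theorem kullback_leibler_inequality
    {𝒳 : Type*} [MeasurableSpace 𝒳] (μ : Measure 𝒳) [SigmaFinite μ]
    (p₀ p : 𝒳 → ℝ) (hp₀meas : Measurable p₀) (hpmeas : Measurable p)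
    (hp₀nonneg : ∀ x, 0 ≤ p₀ x) (hpnonneg : ∀ x, 0 ≤ p x)
    (hp₀int : ∫⁻ x, ENNReal.ofReal (p₀ x) ∂μ = 1)
    (hpint : ∫⁻ x, ENNReal.ofReal (p x) ∂μ = 1)
    (P₀ : Measure 𝒳) (hP₀ : P₀ = μ.withDensity (fun x => ENNReal.ofReal (p₀ x)))
    (α : ℝ) (hα : α ∈ Set.Ioo (0 : ℝ) 1) :
    Real.log (1 - α) ≤ ∫ x, Real.log (1 - α + α * (p x / p₀ x)) ∂P₀
    ∧ ∫ x, Real.log (1 - α + α * (p x / p₀ x)) ∂P₀ ≤ 0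
    ∧ ((∫ x, Real.log (1 - α + α * (p x / p₀ x)) ∂P₀) = 0 ↔ p =ᵐ[μ] p₀) :=
  kullback_leibler_inequality_general μ p₀ p hp₀meas hpmeas hp₀nonneg hpnonneg hp₀int hpint P₀ hP₀ α
    hα
end
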